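/- arXiv:2109.07568 — 2 statements merged into one kernel-verified Lean document; each statement's English description precedes it below -/
import Mathlib

section
/- A normal Cayley graph of a nonabelian simple group has no pair of distinct strongly cospectral vertices. -/
open Matrix

/-- `E` is the orthogonal projection onto the eigenspace of `A` for the eigenvalue `μ`. -/
def IsEigenProjection {V : Type*} [Fintype V] (A : Matrix V V ℝ) (μ : ℝ)
    (E : Matrix V V ℝ) : Prop :=
  E * E = E ∧ E.IsSymm ∧
    (∀ x : V → ℝ, A.mulVec (E.mulVec x) = μ • E.mulVec x) ∧
    (∀ y : V → ℝ, A.mulVec y = μ • y → E.mulVec y = y)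

/-- Vertices `u` and `v` are strongly cospectral: `E e_u = ± E e_v` for every spectral
idempotent `E` of `A`. -/
def StronglyCospectral {V : Type*} [Fintype V] [DecidableEq V]
    (A : Matrix V V ℝ) (u v : V) : Prop :=
  ∀ (μ : ℝ) (E : Matrix V V ℝ), IsEigenProjection A μ E →
    E.mulVec (Pi.single u 1) = E.mulVec (Pi.single v 1) ∨
    E.mulVec (Pi.single u 1) = -E.mulVec (Pi.single v 1)

/-- The adjacency matrix of the Cayley graph `X(G, C)`: `g ~ h` iff `h * g⁻¹ ∈ C`. -/
def cayleyAdj {G : Type*} [Group G] [Fintype G] [DecidableEq G] (C : Finset G) :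
    Matrix G G ℝ :=
  Matrix.of fun g h => if h * g⁻¹ ∈ C then 1 else 0

/-!
Graph automorphisms commute with the spectral idempotents of a symmetric adjacency matrix, and
these idempotents separate vertices; hence an automorphism fixing a vertex `u` fixes every vertex
strongly cospectral to `u`. In a normal Cayley graph right translations and conjugations are
automorphisms. Translating a strongly cospectral pair `(u, v)` to `(1, v * u⁻¹)` and conjugating
shows that `v * u⁻¹` is central, and a nonabelian simple group has trivial centre.
-/

section EigenProjection

variable {n : Type*} [Fintype n] {A E F : Matrix n n ℝ} {μ : ℝ}

theorem IsEigenProjection.unique (hE : IsEigenProjection A μ E) (hF : IsEigenProjection A μ F) :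
    E = F := by
  have absorb : ∀ {P Q : Matrix n n ℝ}, IsEigenProjection A μ P → IsEigenProjection A μ Q →
      Q * P = P := fun hP hQ =>
    mulVec_injective <| funext fun x => by rw [← mulVec_mulVec, hQ.2.2.2 _ (hP.2.2.1 x)]
  calc E = (F * E)ᵀ := by rw [absorb hE hF, hE.2.1]
    _ = E * F := by rw [transpose_mul, hE.2.1, hF.2.1]
    _ = F := absorb hF hE

theorem IsEigenProjection.submatrix {m : Type*} [Fintype m] (hE : IsEigenProjection A μ E)
    (e : m ≃ n) : IsEigenProjection (A.submatrix e e) μ (E.submatrix e e) := by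
  obtain ⟨hidem, hsymm, heigen, hfix⟩ := hE
  refine ⟨by rw [submatrix_mul_equiv, hidem], ?_, fun x => ?_, fun y hy => ?_⟩
  · rw [IsSymm, transpose_submatrix, hsymm]
  · simp only [submatrix_mulVec_equiv, Function.comp_assoc, Equiv.self_comp_symm,
      Function.comp_id, heigen]
    rfl
  · have hy' : A *ᵥ (y ∘ e.symm) = μ • (y ∘ e.symm) := by
      have := congrArg (· ∘ e.symm) hy
      simp only [submatrix_mulVec_equiv, Function.comp_assoc, Equiv.self_comp_symm,
        Function.comp_id] at this
      exact this
    rw [submatrix_mulVec_equiv, hfix _ hy', Function.comp_assoc, Equiv.symm_comp_self,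
      Function.comp_id]

theorem IsEigenProjection.submatrix_eq_self {e : n ≃ n} (hE : IsEigenProjection A μ E)
    (hA : A.submatrix e e = A) : E.submatrix e e = E :=
  (hA ▸ hE.submatrix e).unique hE

variable [DecidableEq n]

theorem isEigenProjection_diagonal (d : n → ℝ) (μ : ℝ) :
    IsEigenProjection (diagonal d) μ (diagonal fun j => if d j = μ then 1 else 0) := by
  refine ⟨by simp [diagonal_mul_diagonal], diagonal_transpose _, fun x => ?_, fun y hy => ?_⟩
  · ext j
    by_cases h : d j = μ <;> simp [mulVec_diagonal, h]
  · ext j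
    have hj : d j * y j = μ * y j := by simpa [mulVec_diagonal] using congrFun hy j
    by_cases h : d j = μ
    · simp [mulVec_diagonal, h]
    · have hy0 : y j = 0 := by
        by_contra hy0
        exact h (mul_right_cancel₀ hy0 hj)
      simp [mulVec_diagonal, h, hy0]

theorem IsEigenProjection.conj {U : Matrix n n ℝ} (hU : U ∈ unitaryGroup n ℝ)
    (hE : IsEigenProjection A μ E) :
    IsEigenProjection (U * A * star U) μ (U * E * star U) := by
  obtain ⟨hidem, hsymm, heigen, hfix⟩ := hE
  have hUU : star U * U = 1 := mem_unitaryGroup_iff'.mp hU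
  have hUU' : U * star U = 1 := mem_unitaryGroup_iff.mp hU
  refine ⟨?_, ?_, fun x => ?_, fun y hy => ?_⟩
  · calc U * E * star U * (U * E * star U) = U * E * (star U * U) * E * star U := by
          simp only [Matrix.mul_assoc]
      _ = U * E * star U := by rw [hUU, Matrix.mul_one, Matrix.mul_assoc U E E, hidem]
  · rw [IsSymm, star_eq_conjTranspose, conjTranspose_eq_transpose_of_trivial, transpose_mul,
      transpose_mul, transpose_transpose, hsymm, Matrix.mul_assoc]
  · calc (U * A * star U) *ᵥ ((U * E * star U) *ᵥ x)
        = U *ᵥ (A *ᵥ (E *ᵥ (star U *ᵥ x))) := by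
          simp only [mulVec_mulVec, Matrix.mul_assoc, ← Matrix.mul_assoc (star U) U, hUU,
            Matrix.one_mul]
      _ = μ • ((U * E * star U) *ᵥ x) := by
          rw [heigen, mulVec_smul]; simp only [mulVec_mulVec, Matrix.mul_assoc]
  · have hy' : A *ᵥ (star U *ᵥ y) = μ • (star U *ᵥ y) := by
      have := congrArg (star U *ᵥ ·) hy
      simpa only [mulVec_mulVec, mulVec_smul, ← Matrix.mul_assoc, hUU, Matrix.one_mul] using this
    rw [← mulVec_mulVec, ← mulVec_mulVec, hfix _ hy', mulVec_mulVec, hUU', one_mulVec]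

theorem exists_isEigenProjection_mulVec_ne_zero (hA : A.IsHermitian) {w : n → ℝ} (hw : w ≠ 0) :
    ∃ μ E, IsEigenProjection A μ E ∧ E *ᵥ w ≠ 0 := by
  set U : Matrix n n ℝ := (hA.eigenvectorUnitary : Matrix n n ℝ)
  have hU : U ∈ unitaryGroup n ℝ := hA.eigenvectorUnitary.2
  have hAU : A = U * diagonal hA.eigenvalues * star U := by
    simpa [RCLike.ofReal_real_eq_id] using hA.spectral_theorem
  obtain ⟨i, hzi⟩ : ∃ i, (star U *ᵥ w) i ≠ 0 := by
    by_contra! h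
    apply hw
    rw [← one_mulVec w, ← mem_unitaryGroup_iff.mp hU, ← mulVec_mulVec, show star U *ᵥ w = 0 from
      funext h, mulVec_zero]
  set P : Matrix n n ℝ := diagonal fun j => if hA.eigenvalues j = hA.eigenvalues i then 1 else 0
  refine ⟨hA.eigenvalues i, U * P * star U, ?_, fun h => hzi ?_⟩
  · convert (isEigenProjection_diagonal hA.eigenvalues _).conj hU
  have key : star U *ᵥ ((U * P * star U) *ᵥ w) = P *ᵥ (star U *ᵥ w) := by
    rw [mulVec_mulVec, ← Matrix.mul_assoc, ← Matrix.mul_assoc, mem_unitaryGroup_iff'.mp hU,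
      Matrix.one_mul, mulVec_mulVec]
  simpa [h, P, mulVec_diagonal] using (congrFun key i).symm

variable {e : n ≃ n}

theorem IsEigenProjection.mulVec_single_equiv (hE : IsEigenProjection A μ E)
    (he : A.submatrix e e = A) (u : n) :
    E *ᵥ Pi.single (e u) 1 = (E *ᵥ Pi.single u 1) ∘ e.symm := by
  funext i
  simpa [mulVec_single_one] using congrFun₂ (hE.submatrix_eq_self he) (e.symm i) u

theorem eq_of_forall_isEigenProjection_mulVec_single_eq (hA : A.IsHermitian) {u v : n}
    (h : ∀ μ E, IsEigenProjection A μ E → E *ᵥ Pi.single u 1 = E *ᵥ Pi.single v 1) :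
    u = v := by
  by_contra huv
  have hw : Pi.single u 1 - Pi.single v 1 ≠ (0 : n → ℝ) := by
    intro h0
    simpa [Pi.single_apply, huv] using congrFun h0 u
  obtain ⟨μ, E, hE, hEw⟩ := exists_isEigenProjection_mulVec_ne_zero hA hw
  exact hEw (by rw [mulVec_sub, h μ E hE, sub_self])

theorem StronglyCospectral.map_equiv {u v : n} (h : StronglyCospectral A u v)
    (he : A.submatrix e e = A) : StronglyCospectral A (e u) (e v) := by
  intro μ E hE
  rw [hE.mulVec_single_equiv he, hE.mulVec_single_equiv he]
  rcases h μ E hE with h | h <;> rw [h]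
  · exact .inl rfl
  · exact .inr rfl

theorem StronglyCospectral.apply_eq_self (hA : A.IsHermitian) {u v : n}
    (h : StronglyCospectral A u v) (he : A.submatrix e e = A) (hu : e u = u) : e v = v := by
  refine eq_of_forall_isEigenProjection_mulVec_single_eq hA fun μ E hE => ?_
  have hfix : (E *ᵥ Pi.single u 1) ∘ e.symm = E *ᵥ Pi.single u 1 := by
    rw [← hE.mulVec_single_equiv he, hu]
  rw [hE.mulVec_single_equiv he]
  rcases h μ E hE with h | h
  · rw [← h, hfix, h]
  · rw [show E *ᵥ Pi.single v 1 = -(E *ᵥ Pi.single u 1) by rw [h, neg_neg]]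
    exact congrArg Neg.neg hfix

end EigenProjection

section Cayley

variable {G : Type*} [Group G] [Fintype G] [DecidableEq G] {C : Finset G}

theorem cayleyAdj_isHermitian (hinv : ∀ c ∈ C, c⁻¹ ∈ C) : (cayleyAdj C).IsHermitian := by
  have hmem : ∀ g h : G, h * g⁻¹ ∈ C → g * h⁻¹ ∈ C := fun g h hc => by
    simpa using hinv _ hc
  ext g h
  simp only [conjTranspose_apply, star_trivial, cayleyAdj, of_apply]
  exact if_congr ⟨hmem h g, hmem g h⟩ rfl rfl

theorem cayleyAdj_submatrix_mulRight (C : Finset G) (g : G) :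
    (cayleyAdj C).submatrix (Equiv.mulRight g) (Equiv.mulRight g) = cayleyAdj C := by
  ext x y
  simp [cayleyAdj, mul_assoc]

theorem cayleyAdj_submatrix_conj (hnorm : ∀ x : G, ∀ c ∈ C, x⁻¹ * c * x ∈ C) (g : G) :
    (cayleyAdj C).submatrix (MulAut.conj g).toEquiv (MulAut.conj g).toEquiv = cayleyAdj C := by
  have hconj : ∀ c, g * c * g⁻¹ ∈ C ↔ c ∈ C := fun c =>
    ⟨fun hc => by simpa [mul_assoc] using hnorm g _ hc, fun hc => by simpa using hnorm g⁻¹ c hc⟩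
  ext x y
  simp only [cayleyAdj, submatrix_apply, of_apply, MulEquiv.toEquiv_eq_coe, MulEquiv.coe_toEquiv,
    MulAut.conj_apply]
  refine if_congr ?_ rfl rfl
  convert hconj (y * x⁻¹) using 2
  group

theorem StronglyCospectral.mul_inv_mem_center_of_cayleyAdj (hinv : ∀ c ∈ C, c⁻¹ ∈ C)
    (hnorm : ∀ x : G, ∀ c ∈ C, x⁻¹ * c * x ∈ C) {u v : G}
    (h : StronglyCospectral (cayleyAdj C) u v) : v * u⁻¹ ∈ Subgroup.center G := by
  have h1 : StronglyCospectral (cayleyAdj C) 1 (v * u⁻¹) := by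
    simpa using h.map_equiv (cayleyAdj_submatrix_mulRight C u⁻¹)
  refine Subgroup.mem_center_iff.mpr fun g => ?_
  have := h1.apply_eq_self (cayleyAdj_isHermitian hinv) (cayleyAdj_submatrix_conj hnorm g)
    (by simp)
  simpa [mul_inv_eq_iff_eq_mul] using this

end Cayley

theorem IsSimpleGroup.eq_one_of_mem_center {G : Type*} [Group G] [IsSimpleGroup G]
    (hna : ∃ a b : G, a * b ≠ b * a) {z : G} (hz : z ∈ Subgroup.center G) : z = 1 := by
  obtain ⟨a, b, hab⟩ := hna
  rcases (Subgroup.center G).normal_of_characteristic.eq_bot_or_eq_top with h | h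
  · rwa [h, Subgroup.mem_bot] at hz
  · exact absurd (Subgroup.mem_center_iff.mp (h ▸ Subgroup.mem_top b) a) hab

theorem stmt6_general {G : Type*} [Group G] [Fintype G] [DecidableEq G] [IsSimpleGroup G]
    (hna : ∃ a b : G, a * b ≠ b * a) (C : Finset G)
    (hinv : ∀ c ∈ C, c⁻¹ ∈ C)
    (hnorm : ∀ x : G, ∀ c ∈ C, x⁻¹ * c * x ∈ C) :
    ¬ ∃ u v : G, u ≠ v ∧ StronglyCospectral (cayleyAdj C) u v := by
  rintro ⟨u, v, huv, h⟩
  have hz := IsSimpleGroup.eq_one_of_mem_center hna (h.mul_inv_mem_center_of_cayleyAdj hinv hnorm)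
  exact huv (mul_inv_eq_one.mp hz).symm

theorem stmt6 {G : Type*} [Group G] [Fintype G] [DecidableEq G] [IsSimpleGroup G]
    (hna : ∃ a b : G, a * b ≠ b * a) (C : Finset G)
    (h1 : (1 : G) ∉ C) (hinv : ∀ c ∈ C, c⁻¹ ∈ C)
    (hnorm : ∀ x : G, ∀ c ∈ C, x⁻¹ * c * x ∈ C) :
    ¬ ∃ u v : G, u ≠ v ∧ StronglyCospectral (cayleyAdj C) u v :=
  stmt6_general hna C hinv hnorm
end

section
/- If a Cayley graph of the cyclic group Z_n has a strongly cospectral set of size at least 2, then n is even, and every strongly cospectral set has size exactly 2. -/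
open Matrix

/-- The adjacency matrix of the Cayley graph `X(G, C)` of an additive group:
`g ~ h` iff `h - g ∈ C`. -/
def addCayleyAdj {G : Type*} [AddGroup G] [Fintype G] [DecidableEq G] (C : Finset G) :
    Matrix G G ℝ :=
  Matrix.of fun g h => if h - g ∈ C then 1 else 0

section Aux

variable {V : Type*} [Fintype V] [DecidableEq V]

lemma matrix_ext_mulVec {M N : Matrix V V ℝ}
    (h : ∀ x : V → ℝ, M.mulVec x = N.mulVec x) : M = N := by
  ext i j
  have := congrFun (h (Pi.single j 1)) i
  simpa using this

lemma sum_mulVec' {ι : Type*} (s : Finset ι) (f : ι → Matrix V V ℝ) (x : V → ℝ) :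
    (∑ i ∈ s, f i).mulVec x = ∑ i ∈ s, (f i).mulVec x := by
  ext g
  simp only [Matrix.mulVec, dotProduct, Finset.sum_apply, Matrix.sum_apply,
    Finset.sum_mul]
  exact Finset.sum_comm

lemma eigenProjection_unique {A : Matrix V V ℝ} {μ : ℝ} {E F : Matrix V V ℝ}
    (hE : IsEigenProjection A μ E) (hF : IsEigenProjection A μ F) : E = F := by
  obtain ⟨-, hEs, hE3, hE4⟩ := hE
  obtain ⟨-, hFs, hF3, hF4⟩ := hF
  have hFE : F * E = E := matrix_ext_mulVec fun x => by
    rw [← Matrix.mulVec_mulVec]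
    exact hF4 _ (hE3 x)
  have hEF : E * F = F := matrix_ext_mulVec fun x => by
    rw [← Matrix.mulVec_mulVec]
    exact hE4 _ (hF3 x)
  have h1 : F * E = F := by
    have := congrArg Matrix.transpose hEF
    rwa [Matrix.transpose_mul, hEs, hFs] at this
  rw [← hFE, h1]

lemma eigenProjection_mul {A : Matrix V V ℝ} {μ : ℝ} {E : Matrix V V ℝ}
    (hE : IsEigenProjection A μ E) : A * E = μ • E :=
  matrix_ext_mulVec fun x => by
    rw [← Matrix.mulVec_mulVec, hE.2.2.1 x, Matrix.smul_mulVec]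

/-- The spectral projection of a real symmetric matrix, as a matrix. -/
noncomputable def specProj (A : Matrix V V ℝ) (hA : A.IsHermitian) (μ : ℝ) :
    Matrix V V ℝ :=
  (hA.eigenvectorUnitary : Matrix V V ℝ)
    * Matrix.diagonal (fun i => if hA.eigenvalues i = μ then (1 : ℝ) else 0)
    * star (hA.eigenvectorUnitary : Matrix V V ℝ)

lemma spectral_real {A : Matrix V V ℝ} (hA : A.IsHermitian) :
    A = (hA.eigenvectorUnitary : Matrix V V ℝ) * Matrix.diagonal hA.eigenvalues
      * star (hA.eigenvectorUnitary : Matrix V V ℝ) := by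
  have := hA.spectral_theorem
  rwa [RCLike.ofReal_real_eq_id, Function.id_comp] at this

lemma specProj_isEigenProjection (A : Matrix V V ℝ) (hA : A.IsHermitian) (μ : ℝ) :
    IsEigenProjection A μ (specProj A hA μ) := by
  set U : Matrix V V ℝ := (hA.eigenvectorUnitary : Matrix V V ℝ) with hUdef
  have hU1 : U * star U = 1 := Matrix.mem_unitaryGroup_iff.mp hA.eigenvectorUnitary.2
  have hU2 : star U * U = 1 := Matrix.mem_unitaryGroup_iff'.mp hA.eigenvectorUnitary.2
  set d : V → ℝ := fun i => if hA.eigenvalues i = μ then (1 : ℝ) else 0 with hddef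
  have hconj : ∀ X Y : Matrix V V ℝ, (U * X * star U) * (U * Y * star U)
      = U * (X * Y) * star U := by
    intro X Y
    calc (U * X * star U) * (U * Y * star U)
        = U * (X * ((star U * U) * (Y * star U))) := by simp only [Matrix.mul_assoc]
      _ = U * (X * Y) * star U := by rw [hU2]; simp only [Matrix.one_mul, Matrix.mul_assoc]
  have hEdef : specProj A hA μ = U * Matrix.diagonal d * star U := rfl
  refine ⟨?_, ?_, ?_, ?_⟩
  · rw [hEdef, hconj, Matrix.diagonal_mul_diagonal]
    have hd : (fun i => d i * d i) = d := by
      funext i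
      by_cases h : hA.eigenvalues i = μ <;> simp [hddef, h]
    rw [hd]
  · have hherm : (specProj A hA μ).IsHermitian := by
      rw [hEdef, Matrix.IsHermitian, Matrix.conjTranspose_mul, Matrix.conjTranspose_mul,
        Matrix.star_eq_conjTranspose, Matrix.conjTranspose_conjTranspose,
        Matrix.diagonal_conjTranspose]
      have hsd : star d = d := by funext i; simp
      rw [hsd, Matrix.mul_assoc]
    rw [Matrix.IsSymm, ← Matrix.conjTranspose_eq_transpose_of_trivial]
    exact hherm
  · intro x
    have hdm : Matrix.diagonal hA.eigenvalues * Matrix.diagonal d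
        = μ • Matrix.diagonal d := by
      rw [Matrix.diagonal_mul_diagonal]
      ext i j
      by_cases h : hA.eigenvalues i = μ <;>
        simp [Matrix.diagonal_apply, hddef, h, Matrix.smul_apply]
    have hAE : A * specProj A hA μ = μ • specProj A hA μ := by
      rw [hEdef]
      conv_lhs => rw [spectral_real hA]
      rw [hconj, hdm, Matrix.mul_smul, Matrix.smul_mul]
    rw [Matrix.mulVec_mulVec, hAE, Matrix.smul_mulVec]
  · intro y hy
    set z : V → ℝ := (star U).mulVec y with hzdef
    have hdiag : (Matrix.diagonal hA.eigenvalues).mulVec z = μ • z := by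
      have h1 : (star U).mulVec (A.mulVec y)
          = (Matrix.diagonal hA.eigenvalues).mulVec z := by
        conv_lhs => rw [spectral_real hA]
        rw [Matrix.mulVec_mulVec, Matrix.mulVec_mulVec, ← Matrix.mul_assoc,
          ← Matrix.mul_assoc, hU2, Matrix.one_mul, ← Matrix.mulVec_mulVec]
      rw [hy] at h1
      rw [← h1, Matrix.mulVec_smul]
    have hz : ∀ i, d i * z i = z i := by
      intro i
      have hci : hA.eigenvalues i * z i = μ * z i := by
        have h1 := congrFun hdiag i
        rw [Matrix.mulVec_diagonal] at h1
        simpa using h1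
      by_cases h : hA.eigenvalues i = μ
      · simp [hddef, h]
      · have hzi : z i = 0 := by
          have h2 : (hA.eigenvalues i - μ) * z i = 0 := by
            rw [sub_mul, hci, sub_self]
          rcases mul_eq_zero.mp h2 with h3 | h3
          · exact absurd (sub_eq_zero.mp h3) h
          · exact h3
        simp [hddef, hzi]
    have hDz : (Matrix.diagonal d).mulVec z = z := by
      funext i
      rw [Matrix.mulVec_diagonal]
      exact hz i
    show (U * Matrix.diagonal d * star U).mulVec y = y
    rw [← Matrix.mulVec_mulVec, ← Matrix.mulVec_mulVec, ← hzdef, hDz, Matrix.mulVec_mulVec,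
      hU1, Matrix.one_mulVec]

lemma specProj_sum (A : Matrix V V ℝ) (hA : A.IsHermitian) :
    ∑ μ ∈ Finset.image hA.eigenvalues Finset.univ, specProj A hA μ = 1 := by
  set U : Matrix V V ℝ := (hA.eigenvectorUnitary : Matrix V V ℝ) with hUdef
  have hU1 : U * star U = 1 := Matrix.mem_unitaryGroup_iff.mp hA.eigenvectorUnitary.2
  have key : ∑ μ ∈ Finset.image hA.eigenvalues Finset.univ,
      Matrix.diagonal (fun i => if hA.eigenvalues i = μ then (1 : ℝ) else 0) = 1 := by
    ext i j
    rw [Matrix.sum_apply]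
    by_cases h : i = j
    · subst h
      simp only [Matrix.diagonal_apply_eq, Matrix.one_apply_eq]
      rw [Finset.sum_ite_eq]
      simp [Finset.mem_image]
    · simp [Matrix.diagonal_apply_ne _ h, Matrix.one_apply_ne h]
  calc ∑ μ ∈ Finset.image hA.eigenvalues Finset.univ, specProj A hA μ
      = U * (∑ μ ∈ Finset.image hA.eigenvalues Finset.univ,
          Matrix.diagonal (fun i => if hA.eigenvalues i = μ then (1 : ℝ) else 0)) * star U := by
        rw [Finset.mul_sum, Finset.sum_mul]
        rfl
    _ = 1 := by rw [key, Matrix.mul_one, hU1]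

end Aux

section Trans

variable {n : ℕ} [NeZero n]

/-- Translation-by-`a` permutation matrix on `ZMod n`. -/
def transM (n : ℕ) [NeZero n] (a : ZMod n) : Matrix (ZMod n) (ZMod n) ℝ :=
  Matrix.of fun g h => if h = g - a then 1 else 0

lemma transM_mulVec (a : ZMod n) (x : ZMod n → ℝ) :
    (transM n a).mulVec x = fun g => x (g - a) := by
  funext g
  simp only [transM, Matrix.mulVec, dotProduct, Matrix.of_apply, ite_mul, one_mul,
    zero_mul]
  rw [Finset.sum_ite_eq' Finset.univ (g - a) x]
  simp

lemma transM_mul (a b : ZMod n) : transM n a * transM n b = transM n (a + b) := by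
  ext g h
  simp only [transM, Matrix.mul_apply, Matrix.of_apply, ite_mul, one_mul, zero_mul]
  rw [Finset.sum_ite_eq' Finset.univ (g - a) (fun k => if h = k - b then (1:ℝ) else 0)]
  simp only [Finset.mem_univ, if_true, sub_sub]

lemma transM_zero : transM n 0 = 1 := by
  ext g h
  simp only [transM, Matrix.of_apply, sub_zero, Matrix.one_apply]
  exact if_congr eq_comm rfl rfl

lemma transM_transpose (a : ZMod n) : (transM n a)ᵀ = transM n (-a) := by
  ext g h
  simp only [transM, Matrix.transpose_apply, Matrix.of_apply, sub_neg_eq_add]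
  refine if_congr ?_ rfl rfl
  constructor
  · intro h'; rw [h']; ring
  · intro h'; rw [h']; ring

lemma transM_comm_adj (C : Finset (ZMod n)) (a : ZMod n) :
    transM n a * addCayleyAdj C = addCayleyAdj C * transM n a := by
  ext g h
  have hL : (transM n a * addCayleyAdj C) g h = if h - (g - a) ∈ C then (1:ℝ) else 0 := by
    simp only [transM, addCayleyAdj, Matrix.mul_apply, Matrix.of_apply, ite_mul, one_mul,
      zero_mul]
    rw [Finset.sum_ite_eq' Finset.univ (g - a) (fun k => if h - k ∈ C then (1:ℝ) else 0)]
    simp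
  have hR : (addCayleyAdj C * transM n a) g h = if (h + a) - g ∈ C then (1:ℝ) else 0 := by
    simp only [transM, addCayleyAdj, Matrix.mul_apply, Matrix.of_apply, mul_ite, mul_one,
      mul_zero]
    have hcong : ∀ k : ZMod n, (if h = k - a then (if k - g ∈ C then (1:ℝ) else 0) else 0)
        = (if k = h + a then (if k - g ∈ C then (1:ℝ) else 0) else 0) := by
      intro k
      refine if_congr ?_ rfl rfl
      constructor
      · intro h'; rw [h']; ring
      · intro h'; rw [h']; ring
    rw [Finset.sum_congr rfl fun k _ => hcong k,
      Finset.sum_ite_eq' Finset.univ (h + a) (fun k => if k - g ∈ C then (1:ℝ) else 0)]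
    simp
  rw [hL, hR]
  have : h - (g - a) = h + a - g := by ring
  rw [this]

lemma transM_single (a b : ZMod n) :
    (transM n a).mulVec (Pi.single b 1) = Pi.single (b + a) 1 := by
  rw [transM_mulVec]
  funext g
  simp only [Pi.single_apply]
  refine if_congr ?_ rfl rfl
  constructor
  · intro h'; rw [← h']; ring
  · intro h'; rw [h']; ring

lemma eigenProjection_conj {A : Matrix (ZMod n) (ZMod n) ℝ} {μ : ℝ}
    {E : Matrix (ZMod n) (ZMod n) ℝ} (hE : IsEigenProjection A μ E) (a : ZMod n)
    (hcomm : ∀ b : ZMod n, transM n b * A = A * transM n b) :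
    IsEigenProjection A μ (transM n (-a) * E * transM n a) := by
  have hTT : transM n a * transM n (-a) = 1 := by
    rw [transM_mul, add_neg_cancel, transM_zero]
  have hTT' : transM n (-a) * transM n a = 1 := by
    rw [transM_mul, neg_add_cancel, transM_zero]
  obtain ⟨hE1, hE2, hE3, hE4⟩ := hE
  refine ⟨?_, ?_, ?_, ?_⟩
  · calc (transM n (-a) * E * transM n a) * (transM n (-a) * E * transM n a)
        = transM n (-a) * (E * ((transM n a * transM n (-a)) * (E * transM n a))) := by
          simp only [Matrix.mul_assoc]
      _ = transM n (-a) * E * transM n a := by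
          rw [hTT, Matrix.one_mul, ← Matrix.mul_assoc E E, hE1, Matrix.mul_assoc]
  · rw [Matrix.IsSymm, Matrix.transpose_mul, Matrix.transpose_mul, transM_transpose,
      transM_transpose, neg_neg, hE2, Matrix.mul_assoc]
  · intro x
    have hAE : A * E = μ • E := matrix_ext_mulVec fun x => by
      rw [← Matrix.mulVec_mulVec, hE3 x, Matrix.smul_mulVec]
    have : A * (transM n (-a) * E * transM n a) = μ • (transM n (-a) * E * transM n a) := by
      calc A * (transM n (-a) * E * transM n a)
          = (A * transM n (-a)) * E * transM n a := by simp only [Matrix.mul_assoc]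
        _ = transM n (-a) * (A * E) * transM n a := by
            rw [← hcomm (-a)]; simp only [Matrix.mul_assoc]
        _ = μ • (transM n (-a) * E * transM n a) := by
            rw [hAE, Matrix.mul_smul, Matrix.smul_mul]
    rw [Matrix.mulVec_mulVec, this, Matrix.smul_mulVec]
  · intro y hy
    have h1 : A.mulVec ((transM n a).mulVec y) = μ • (transM n a).mulVec y := by
      rw [Matrix.mulVec_mulVec, ← hcomm a, ← Matrix.mulVec_mulVec, hy, Matrix.mulVec_smul]
    have h2 : E.mulVec ((transM n a).mulVec y) = (transM n a).mulVec y := hE4 _ h1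
    rw [← Matrix.mulVec_mulVec, ← Matrix.mulVec_mulVec, h2, Matrix.mulVec_mulVec, hTT',
      Matrix.one_mulVec]

end Trans

section Key

variable {n : ℕ} [NeZero n]

lemma adj_isHermitian (C : Finset (ZMod n)) (hinv : ∀ c ∈ C, -c ∈ C) :
    (addCayleyAdj C).IsHermitian := by
  rw [Matrix.IsHermitian, Matrix.conjTranspose_eq_transpose_of_trivial]
  ext g h
  simp only [addCayleyAdj, Matrix.transpose_apply, Matrix.of_apply]
  refine if_congr ⟨fun hc => ?_, fun hc => ?_⟩ rfl rfl
  · have := hinv _ hc; rwa [neg_sub] at this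
  · have := hinv _ hc; rwa [neg_sub] at this

lemma sc_eq (C : Finset (ZMod n)) (hinv : ∀ c ∈ C, -c ∈ C)
    {u v : ZMod n} (h : StronglyCospectral (addCayleyAdj C) u v) : u + u = v + v := by
  classical
  set A := addCayleyAdj C with hAdef
  have hA : A.IsHermitian := adj_isHermitian C hinv
  set ε : ℝ → ℝ := fun μ =>
    if (specProj A hA μ).mulVec (Pi.single u 1) = (specProj A hA μ).mulVec (Pi.single v 1)
      then 1 else -1 with hεdef
  have hεpos : ∀ μ, (specProj A hA μ).mulVec (Pi.single u 1)
      = (specProj A hA μ).mulVec (Pi.single v 1) → ε μ = 1 := fun μ hc => by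
    rw [hεdef]; exact if_pos hc
  have hεneg : ∀ μ, ¬ ((specProj A hA μ).mulVec (Pi.single u 1)
      = (specProj A hA μ).mulVec (Pi.single v 1)) → ε μ = -1 := fun μ hc => by
    rw [hεdef]; exact if_neg hc
  have hε2 : ∀ μ, ε μ * ε μ = 1 := by
    intro μ
    by_cases hc : (specProj A hA μ).mulVec (Pi.single u 1)
        = (specProj A hA μ).mulVec (Pi.single v 1)
    · rw [hεpos μ hc]; norm_num
    · rw [hεneg μ hc]; norm_num
  have hεu : ∀ μ, (specProj A hA μ).mulVec (Pi.single u 1)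
      = ε μ • (specProj A hA μ).mulVec (Pi.single v 1) := by
    intro μ
    by_cases hc : (specProj A hA μ).mulVec (Pi.single u 1)
        = (specProj A hA μ).mulVec (Pi.single v 1)
    · rw [hεpos μ hc, one_smul]; exact hc
    · rcases h μ (specProj A hA μ) (specProj_isEigenProjection A hA μ) with h1 | h1
      · exact absurd h1 hc
      · rw [hεneg μ hc, h1, neg_one_smul]
  have hεv : ∀ μ, (specProj A hA μ).mulVec (Pi.single v 1)
      = ε μ • (specProj A hA μ).mulVec (Pi.single u 1) := by
    intro μ
    rw [hεu μ, smul_smul, hε2 μ, one_smul]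
  set sp := Finset.image hA.eigenvalues Finset.univ with hsp
  set Q : Matrix (ZMod n) (ZMod n) ℝ := ∑ μ ∈ sp, ε μ • specProj A hA μ with hQdef
  have hQu : Q.mulVec (Pi.single u 1) = Pi.single v 1 := by
    rw [hQdef, sum_mulVec']
    have : ∀ μ ∈ sp, (ε μ • specProj A hA μ).mulVec (Pi.single u 1)
        = (specProj A hA μ).mulVec (Pi.single v 1) := by
      intro μ _
      rw [Matrix.smul_mulVec, hεu μ, smul_smul, hε2 μ, one_smul]
    rw [Finset.sum_congr rfl this, ← sum_mulVec', specProj_sum, Matrix.one_mulVec]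
  have hQv : Q.mulVec (Pi.single v 1) = Pi.single u 1 := by
    rw [hQdef, sum_mulVec']
    have : ∀ μ ∈ sp, (ε μ • specProj A hA μ).mulVec (Pi.single v 1)
        = (specProj A hA μ).mulVec (Pi.single u 1) := by
      intro μ _
      rw [Matrix.smul_mulVec, hεv μ, smul_smul, hε2 μ, one_smul]
    rw [Finset.sum_congr rfl this, ← sum_mulVec', specProj_sum, Matrix.one_mulVec]
  -- commutation of Q with the translation by v - u
  set g : ZMod n := v - u with hgdef
  have hcomm : ∀ b : ZMod n, transM n b * A = A * transM n b := fun b => transM_comm_adj C b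
  have hTP : ∀ μ, transM n g * specProj A hA μ = specProj A hA μ * transM n g := by
    intro μ
    have h1 : transM n (-g) * specProj A hA μ * transM n g = specProj A hA μ :=
      eigenProjection_unique (eigenProjection_conj (specProj_isEigenProjection A hA μ) g hcomm)
        (specProj_isEigenProjection A hA μ)
    have h2 := congrArg (fun M => transM n g * M) h1
    simp only [← Matrix.mul_assoc] at h2
    rw [transM_mul, add_neg_cancel, transM_zero, Matrix.one_mul] at h2
    exact h2.symm
  have hTQ : transM n g * Q = Q * transM n g := by
    rw [hQdef, Finset.mul_sum, Finset.sum_mul]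
    refine Finset.sum_congr rfl fun μ _ => ?_
    rw [Matrix.mul_smul, Matrix.smul_mul, hTP μ]
  -- e_u = Q e_v = Q T_g e_u = T_g Q e_u = T_g e_v = e_{v + g}
  have hTeu : (transM n g).mulVec (Pi.single u 1) = Pi.single v 1 := by
    rw [transM_single, hgdef]
    congr 1
    ring
  have key : (Pi.single u 1 : ZMod n → ℝ) = Pi.single (v + g) 1 := by
    calc (Pi.single u 1 : ZMod n → ℝ) = Q.mulVec (Pi.single v 1) := hQv.symm
      _ = Q.mulVec ((transM n g).mulVec (Pi.single u 1)) := by rw [hTeu]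
      _ = (Q * transM n g).mulVec (Pi.single u 1) := by rw [Matrix.mulVec_mulVec]
      _ = (transM n g * Q).mulVec (Pi.single u 1) := by rw [hTQ]
      _ = (transM n g).mulVec (Q.mulVec (Pi.single u 1)) := by rw [Matrix.mulVec_mulVec]
      _ = (transM n g).mulVec (Pi.single v 1) := by rw [hQu]
      _ = Pi.single (v + g) 1 := by rw [transM_single]
  have hne : u = v + g := by
    by_contra hne
    have hk := congrFun key u
    simp [Pi.single_apply, hne] at hk
  rw [hgdef] at hne
  linear_combination hne

lemma invol_val {x : ZMod n} (hx : x ≠ 0) (h2 : x + x = 0) :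
    x.val + x.val = n := by
  have hcast : ((x.val + x.val : ℕ) : ZMod n) = 0 := by
    push_cast
    rw [ZMod.natCast_rightInverse x]
    exact h2
  have hdvd : n ∣ x.val + x.val := (ZMod.natCast_eq_zero_iff _ n).mp hcast
  have hvlt : x.val < n := ZMod.val_lt x
  have hv0 : x.val ≠ 0 := fun h => hx ((ZMod.val_eq_zero x).mp h)
  obtain ⟨k, hk⟩ := hdvd
  rcases k with _ | _ | k
  · omega
  · omega
  · exfalso
    have h6 : n * 2 ≤ n * (k + 1 + 1) := Nat.mul_le_mul_left n (by omega)
    have hn : 0 < n := Nat.pos_of_ne_zero (NeZero.ne n)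
    linarith

lemma invol_unique {x y : ZMod n} (hx0 : x ≠ 0) (hy0 : y ≠ 0)
    (hx : x + x = 0) (hy : y + y = 0) : x = y := by
  have h1 := invol_val hx0 hx
  have h2 := invol_val hy0 hy
  exact ZMod.val_injective n (by omega)

end Key

theorem stmt7 (n : ℕ) [NeZero n] (C : Finset (ZMod n)) (h0 : (0 : ZMod n) ∉ C)
    (hinv : ∀ c ∈ C, -c ∈ C)
    (hex : ∃ S : Finset (ZMod n), 2 ≤ S.card ∧
      ∀ u ∈ S, ∀ v ∈ S, StronglyCospectral (addCayleyAdj C) u v) :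
    Even n ∧ ∀ S : Finset (ZMod n), 2 ≤ S.card →
      (∀ u ∈ S, ∀ v ∈ S, StronglyCospectral (addCayleyAdj C) u v) → S.card = 2 := by
  obtain ⟨S, hS2, hSC⟩ := hex
  obtain ⟨u, hu, v, hv, huv⟩ := Finset.one_lt_card.mp hS2
  have h1 : u + u = v + v := sc_eq C hinv (hSC u hu v hv)
  have hg0 : v - u ≠ 0 := sub_ne_zero.mpr (Ne.symm huv)
  have hgg : (v - u) + (v - u) = 0 := by linear_combination -h1
  constructor
  · have hval := invol_val hg0 hgg
    exact ⟨(v - u).val, by omega⟩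
  · intro S' hS2' hSC'
    obtain ⟨a, ha, b, hb, hab⟩ := Finset.one_lt_card.mp hS2'
    have hsub : S' ⊆ {a, b} := by
      intro w hw
      rw [Finset.mem_insert, Finset.mem_singleton]
      by_cases hwa : w = a
      · exact Or.inl hwa
      · right
        have h2 : a + a = w + w := sc_eq C hinv (hSC' a ha w hw)
        have h3 : a + a = b + b := sc_eq C hinv (hSC' a ha b hb)
        have hwa0 : w - a ≠ 0 := sub_ne_zero.mpr hwa
        have hba0 : b - a ≠ 0 := sub_ne_zero.mpr (Ne.symm hab)
        have e1 : (w - a) + (w - a) = 0 := by linear_combination -h2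
        have e2 : (b - a) + (b - a) = 0 := by linear_combination -h3
        have h4 : w - a = b - a := invol_unique hwa0 hba0 e1 e2
        linear_combination h4
    have hcard : S'.card ≤ 2 :=
      (Finset.card_le_card hsub).trans (le_of_eq (Finset.card_pair hab))
    omega
end
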